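/- Let θ > 0, ρ ≤ 0, and let b(x) → 0 with |b| regularly varying at infinity with index ρ. Suppose k_n → ∞, log(k_n)/log(n) → 0, k_n^{1/2}·b(log(n/k_n)) → λ ∈ ℝ, and b is ultimately non-negative. Define β = 2·lim_{x→∞} x·b(x) ∈ [0,+∞] (assumed to exist). If β < θ, then for all n large enough AMSE(θ̂_n^{(1)}) < min(AMSE(θ̂_n^{(2)}), AMSE(θ̂_n^{(3)})). -/

import Mathlib

open MeasureTheory ProbabilityTheory Filter Real Topology

noncomputable section

/-- `K_ρ(λ) = ∫_1^λ u^(ρ-1) du`. -/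
def Krho (ρ lam : ℝ) : ℝ := ∫ u in (1:ℝ)..lam, u ^ (ρ - 1)

/-- `μ_ρ(t) = ∫_0^∞ K_ρ(1 + x/t) e^(-x) dx`. -/
def muRho (ρ t : ℝ) : ℝ := ∫ x in Set.Ioi (0:ℝ), Krho ρ (1 + x / t) * Real.exp (-x)

/-- `σ_ρ²(t) = ∫_0^∞ K_ρ²(1 + x/t) e^(-x) dx - μ_ρ²(t)`. -/
def sigmaRhoSq (ρ t : ℝ) : ℝ :=
  (∫ x in Set.Ioi (0:ℝ), (Krho ρ (1 + x / t)) ^ 2 * Real.exp (-x)) - (muRho ρ t) ^ 2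

/-- A function is slowly varying at infinity. -/
def SlowlyVarying (l : ℝ → ℝ) : Prop :=
  ∀ c > (0:ℝ), Tendsto (fun x => l (c * x) / l x) atTop (𝓝 1)

/-- A function is regularly varying at infinity with index `ρ`. -/
def RegularlyVarying (g : ℝ → ℝ) (ρ : ℝ) : Prop :=
  ∀ c > (0:ℝ), Tendsto (fun x => g (c * x) / g x) atTop (𝓝 (c ^ ρ))

/-- Convergence in distribution of a sequence of real random variables towards the
law `μlim`, expressed through convergence of integrals of bounded continuous functions. -/
def TendstoInDistribution {Ω : Type*} [MeasurableSpace Ω] (P : Measure Ω)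
    (Z : ℕ → Ω → ℝ) (μlim : Measure ℝ) : Prop :=
  ∀ f : BoundedContinuousFunction ℝ ℝ,
    Tendsto (fun n => ∫ ω, f (Z n ω) ∂P) atTop (𝓝 (∫ x, f x ∂μlim))

/-- Convergence to `0` in probability (`o_P(1)`). -/
def TendstoInProbabilityZero {Ω : Type*} [MeasurableSpace Ω] (P : Measure Ω)
    (Z : ℕ → Ω → ℝ) : Prop :=
  ∀ δ > (0:ℝ), Tendsto (fun n => P {ω | δ ≤ |Z n ω|}) atTop (𝓝 0)

/-!
With `t = log (n / k)`, the first estimator is unbiased (`a₁ = 0`), so `AMSE₁` only carries the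
bias `b(t)`. The sum `T₂` is a right-endpoint Riemann sum of the strictly decreasing function
`s ↦ log (1 - log s / t)`, whose integral over `(0, 1)` is `μ₀(t)` (substitute `s = e^{-x}`);
hence `0 < T₂ < μ₀(t)`, `a₂ > 0`, and for `b ≥ 0` the bias `θ a₂ + b` exceeds `b`.
For `T₃`, the bound `log (1 + u) ≤ u - u²/2 + u³/3` gives `1 - t μ₀(t) ≥ (1 - 2/t)/t`, so
`θ a₃ ≤ -θ (1 - 2/t)/t`, while `2 t b(t)` is eventually below any `r ∈ (β, θ)`, hence below
`θ (1 - 2/t)`: thus `θ a₃ + 2 b < 0`, and again `|θ a₃ + b| > b`.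
-/

open Set intervalIntegral

namespace Real

theorem log_one_add_le_cubic {u : ℝ} (hu : 0 ≤ u) : log (1 + u) ≤ u - u ^ 2 / 2 + u ^ 3 / 3 := by
  let f : ℝ → ℝ := fun u => u - u ^ 2 / 2 + u ^ 3 / 3 - log (1 + u)
  have hderiv : ∀ x, 0 ≤ x → HasDerivAt f (x ^ 3 / (1 + x)) x := by
    intro x hx
    have hlog : HasDerivAt (fun u => log (1 + u)) (1 / (1 + x)) x := by
      simpa using ((hasDerivAt_id x).const_add 1).log (by simp; linarith)
    refine ((((hasDerivAt_id' x).sub ((hasDerivAt_pow 2 x).div_const 2)).add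
      ((hasDerivAt_pow 3 x).div_const 3)).sub hlog).congr_deriv ?_
    field_simp
    ring
  have hmono : MonotoneOn f (Ici 0) :=
    monotoneOn_of_hasDerivWithinAt_nonneg (convex_Ici 0)
      (fun x hx => (hderiv x hx).continuousAt.continuousWithinAt)
      (fun x hx => (hderiv x (interior_subset hx).out).hasDerivWithinAt)
      (fun x hx => by have := (interior_subset hx).out; positivity)
  have := hmono self_mem_Ici hu hu
  simp only [f] at this
  norm_num at this
  linarith

theorem integrableOn_pow_mul_exp_neg_Ioi (n : ℕ) :
    IntegrableOn (fun x : ℝ => x ^ n * exp (-x)) (Ioi 0) := by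
  refine (GammaIntegral_convergent (s := n + 1) (by positivity)).congr_fun (fun x _ => ?_)
    measurableSet_Ioi
  simp [mul_comm]

theorem integral_pow_mul_exp_neg_Ioi (n : ℕ) :
    ∫ x in Ioi (0 : ℝ), x ^ n * exp (-x) = n.factorial := by
  rw [← Gamma_nat_eq_factorial, Gamma_eq_integral (by positivity)]
  refine setIntegral_congr_fun measurableSet_Ioi (fun x _ => ?_)
  simp [mul_comm]

theorem image_exp_neg_Ioi_zero : (fun x => exp (-x)) '' Ioi 0 = Ioo 0 1 := by
  ext s
  constructor
  · rintro ⟨x, hx, rfl⟩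
    exact ⟨exp_pos _, exp_lt_one_iff.2 (neg_lt_zero.2 hx)⟩
  · rintro ⟨hs0, hs1⟩
    exact ⟨-log s, neg_pos.2 (log_neg hs0 hs1), by simp [exp_log hs0]⟩

theorem integral_comp_exp_neg_Ioi (g : ℝ → ℝ) :
    ∫ x in Ioi 0, exp (-x) * g (exp (-x)) = ∫ s in Ioo 0 1, g s := by
  rw [← image_exp_neg_Ioi_zero]
  simpa [abs_of_pos (exp_pos _)] using (integral_image_eq_integral_abs_deriv_smul
    measurableSet_Ioi (fun x _ => (hasDerivAt_neg x).exp.hasDerivWithinAt)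
    (exp_injective.comp neg_injective).injOn g).symm

theorem integrableOn_comp_exp_neg_Ioi (g : ℝ → ℝ) :
    IntegrableOn (fun x => exp (-x) * g (exp (-x))) (Ioi 0) ↔ IntegrableOn g (Ioo 0 1) := by
  rw [← image_exp_neg_Ioi_zero]
  simpa [abs_of_pos (exp_pos _)] using (integrableOn_image_iff_integrableOn_abs_deriv_smul
    measurableSet_Ioi (fun x _ => (hasDerivAt_neg x).exp.hasDerivWithinAt)
    (exp_injective.comp neg_injective).injOn g).symm

end Real

open Real

theorem StrictAntiOn.sub_mul_lt_intervalIntegral {G : ℝ → ℝ} {a b : ℝ} (hab : a < b)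
    (hG : StrictAntiOn G (Ioc a b)) (hint : IntervalIntegrable G volume a b) :
    (b - a) * G b < ∫ x in a..b, G x := by
  have hpos : 0 < ∫ x in a..b, (G x - G b) :=
    intervalIntegral_pos_of_pos_on (hint.sub intervalIntegrable_const)
      (fun x hx => sub_pos.2 (hG ⟨hx.1, hx.2.le⟩ ⟨hab, le_rfl⟩ hx.2)) hab
  rw [integral_sub hint intervalIntegrable_const, intervalIntegral.integral_const,
    smul_eq_mul] at hpos
  linarith

theorem StrictAntiOn.riemannSum_lt_intervalIntegral {G : ℝ → ℝ} (hG : StrictAntiOn G (Ioc 0 1))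
    (hint : IntegrableOn G (Ioc 0 1)) {k : ℕ} (hk : 0 < k) :
    1 / (k : ℝ) * ∑ i ∈ Finset.Icc 1 k, G (i / k) < ∫ x in (0 : ℝ)..1, G x := by
  have hk' : (0 : ℝ) < k := by exact_mod_cast hk
  let a : ℕ → ℝ := fun j => j / k
  have hlt : ∀ j, a j < a (j + 1) := fun j => by
    simp only [a]; gcongr; linarith
  have hsub : ∀ j < k, Ioc (a j) (a (j + 1)) ⊆ Ioc 0 1 := by
    intro j hj x hx
    refine ⟨lt_of_le_of_lt (by positivity) hx.1, hx.2.trans ?_⟩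
    rw [div_le_one hk']
    exact_mod_cast hj
  have hint' : ∀ j < k, IntervalIntegrable G volume (a j) (a (j + 1)) := fun j hj =>
    (intervalIntegrable_iff_integrableOn_Ioc_of_le (hlt j).le).2 (hint.mono_set (hsub j hj))
  calc 1 / (k : ℝ) * ∑ i ∈ Finset.Icc 1 k, G (i / k)
      = ∑ j ∈ Finset.range k, (a (j + 1) - a j) * G (a (j + 1)) := by
        rw [Finset.mul_sum, ← Finset.Ico_add_one_right_eq_Icc, Finset.sum_Ico_eq_sum_range]
        refine Finset.sum_congr rfl (fun j _ => ?_)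
        simp only [a]
        push_cast
        congr 1
        · field_simp; ring
        · ring_nf
    _ < ∑ j ∈ Finset.range k, ∫ x in a j..a (j + 1), G x :=
        Finset.sum_lt_sum_of_nonempty (Finset.nonempty_range_iff.2 hk.ne') fun j hj =>
          have hj := Finset.mem_range.1 hj
          (hG.mono (hsub j hj)).sub_mul_lt_intervalIntegral (hlt j) (hint' j hj)
    _ = ∫ x in (0 : ℝ)..1, G x := by
        rw [sum_integral_adjacent_intervals hint']
        simp [a, hk'.ne']

theorem Krho_zero {l : ℝ} (hl : 0 < l) : Krho 0 l = log l := by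
  rw [Krho, zero_sub, integral_congr (g := fun u => u⁻¹) (fun u _ => rpow_neg_one u),
    integral_inv (notMem_uIcc_of_lt one_pos hl), div_one]

section muRhoZero

variable {t : ℝ}

theorem muRho_zero_eq (ht : 0 < t) :
    muRho 0 t = ∫ x in Ioi 0, log (1 + x / t) * exp (-x) :=
  setIntegral_congr_fun measurableSet_Ioi fun x hx => by
    rw [Krho_zero (by have := hx.out; positivity)]

theorem integrableOn_log_one_add_div_mul_exp_neg (ht : 0 < t) :
    IntegrableOn (fun x => log (1 + x / t) * exp (-x)) (Ioi 0) := by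
  refine ((integrableOn_pow_mul_exp_neg_Ioi 1).const_mul t⁻¹).mono' ?_ ?_
  · exact (ContinuousOn.mul (ContinuousOn.log (by fun_prop) fun x hx => by
      have := hx.out; positivity) (by fun_prop)).aestronglyMeasurable measurableSet_Ioi
  · refine (ae_restrict_iff' measurableSet_Ioi).2 (Eventually.of_forall fun x hx => ?_)
    have hx := hx.out
    have hlog := log_le_sub_one_of_pos (show 0 < 1 + x / t by positivity)
    rw [norm_mul, norm_of_nonneg (log_nonneg (by simp; positivity)), norm_of_nonneg (exp_pos _).le]
    calc log (1 + x / t) * exp (-x) ≤ x / t * exp (-x) := by gcongr; linarith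
      _ = t⁻¹ * (x ^ 1 * exp (-x)) := by ring

theorem muRho_zero_le (ht : 0 < t) : muRho 0 t ≤ 1 / t - 1 / t ^ 2 + 2 / t ^ 3 := by
  have h1 := (integrableOn_pow_mul_exp_neg_Ioi 1).const_mul (1 / t)
  have h2 := (integrableOn_pow_mul_exp_neg_Ioi 2).const_mul (-(1 / (2 * t ^ 2)))
  have h3 := (integrableOn_pow_mul_exp_neg_Ioi 3).const_mul (1 / (3 * t ^ 3))
  have h12 : IntegrableOn (fun x => 1 / t * (x ^ 1 * exp (-x))
      + -(1 / (2 * t ^ 2)) * (x ^ 2 * exp (-x))) (Ioi 0) := h1.add h2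
  calc muRho 0 t
      ≤ ∫ x in Ioi 0, (1 / t * (x ^ 1 * exp (-x)) + -(1 / (2 * t ^ 2)) * (x ^ 2 * exp (-x))
          + 1 / (3 * t ^ 3) * (x ^ 3 * exp (-x))) := by
        rw [muRho_zero_eq ht]
        refine setIntegral_mono_on (integrableOn_log_one_add_div_mul_exp_neg ht)
          (h12.add h3) measurableSet_Ioi fun x hx => ?_
        calc log (1 + x / t) * exp (-x)
            ≤ (x / t - (x / t) ^ 2 / 2 + (x / t) ^ 3 / 3) * exp (-x) := by
              gcongr
              exact log_one_add_le_cubic (by have := hx.out; positivity)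
          _ = _ := by field_simp; ring
    _ = 1 / t - 1 / t ^ 2 + 2 / t ^ 3 := by
        simp only [integral_add h12 h3, integral_add h1 h2, MeasureTheory.integral_const_mul,
          integral_pow_mul_exp_neg_Ioi]
        norm_num [Nat.factorial]
        field_simp
        ring

theorem one_div_sub_le_one_sub_mul_muRho_zero (ht : 0 < t) :
    1 / t - 2 / t ^ 2 ≤ 1 - t * muRho 0 t := by
  have := mul_le_mul_of_nonneg_left (muRho_zero_le ht) ht.le
  field_simp at this ⊢
  linarith

theorem muRho_zero_eq_intervalIntegral (ht : 0 < t) :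
    muRho 0 t = ∫ s in (0 : ℝ)..1, log (1 - log s / t) := by
  rw [integral_of_le zero_le_one, integral_Ioc_eq_integral_Ioo, ← integral_comp_exp_neg_Ioi,
    muRho_zero_eq ht]
  refine setIntegral_congr_fun measurableSet_Ioi fun x _ => ?_
  simp only [log_exp]
  ring_nf

theorem integrableOn_log_one_sub_log_div (ht : 0 < t) :
    IntegrableOn (fun s => log (1 - log s / t)) (Ioc 0 1) := by
  rw [integrableOn_Ioc_iff_integrableOn_Ioo, ← integrableOn_comp_exp_neg_Ioi]
  refine (integrableOn_log_one_add_div_mul_exp_neg ht).congr_fun (fun x _ => ?_) measurableSet_Ioi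
  simp only [log_exp]
  ring_nf

theorem strictAntiOn_log_one_sub_log_div (ht : 0 < t) :
    StrictAntiOn (fun s => log (1 - log s / t)) (Ioc 0 1) := by
  intro x hx y hy hxy
  have hy0 : log y / t ≤ 0 := div_nonpos_of_nonpos_of_nonneg (log_nonpos hy.1.le hy.2) ht.le
  have hxy' : log x / t < log y / t := by gcongr; exact hx.1
  exact log_lt_log (by linarith) (by linarith)

theorem riemannSum_lt_muRho_zero (ht : 0 < t) {k : ℕ} (hk : 0 < k) :
    1 / (k : ℝ) * ∑ i ∈ Finset.Icc 1 k, log (1 - log ((i : ℝ) / k) / t) < muRho 0 t := by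
  rw [muRho_zero_eq_intervalIntegral ht]
  exact (strictAntiOn_log_one_sub_log_div ht).riemannSum_lt_intervalIntegral
    (integrableOn_log_one_sub_log_div ht) hk

theorem riemannSum_pos (ht : 0 < t) {k : ℕ} (hk : 2 ≤ k) :
    0 < 1 / (k : ℝ) * ∑ i ∈ Finset.Icc 1 k, log (1 - log ((i : ℝ) / k) / t) := by
  have hk' : (2 : ℝ) ≤ k := by exact_mod_cast hk
  refine mul_pos (by positivity) (Finset.sum_pos' (fun i hi => ?_) ⟨1, ?_, ?_⟩)
  · have hi := Finset.mem_Icc.1 hi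
    have hlog : log ((i : ℝ) / k) ≤ 0 :=
      log_nonpos (by positivity) (div_le_one_of_le₀ (by exact_mod_cast hi.2) (by positivity))
    exact log_nonneg (by linarith [div_nonpos_of_nonpos_of_nonneg hlog ht.le])
  · exact Finset.mem_Icc.2 ⟨le_rfl, by omega⟩
  · have hlog : log (((1 : ℕ) : ℝ) / k) < 0 :=
      log_neg (by positivity) (by rw [div_lt_one (by positivity)]; push_cast; linarith)
    exact log_pos (by linarith [div_neg_of_neg_of_pos hlog ht])

end muRhoZero

theorem tendsto_log_div_atTop {k : ℕ → ℕ} (hk : ∀ᶠ n in atTop, k n ≠ 0)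
    (hlog : Tendsto (fun n : ℕ => log (k n) / log n) atTop (𝓝 0)) :
    Tendsto (fun n : ℕ => log ((n : ℝ) / k n)) atTop atTop := by
  have hlogn : Tendsto (fun n : ℕ => log n) atTop atTop :=
    tendsto_log_atTop.comp tendsto_natCast_atTop_atTop
  have hfactor : Tendsto (fun n : ℕ => 1 - log (k n) / log n) atTop (𝓝 1) := by
    simpa using hlog.const_sub 1
  refine (hlogn.atTop_mul_pos one_pos hfactor).congr' ?_
  filter_upwards [hk, eventually_ne_atTop 0, hlogn.eventually_ne_atTop 0] with n hkn hn hlogn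
  rw [log_div (by exact_mod_cast hn) (by exact_mod_cast hkn)]
  field_simp

theorem eventually_two_mul_lt_of_tendsto {b : ℝ → ℝ} {β : EReal} {θ : ℝ}
    (hβ : Tendsto (fun x : ℝ => ((2 * x * b x : ℝ) : EReal)) atTop (𝓝 β)) (hβθ : β < θ) :
    ∀ᶠ x in atTop, 2 * b x < θ * (1 / x - 2 / x ^ 2) := by
  obtain ⟨r, hβr, hrθ⟩ := EReal.lt_iff_exists_real_btwn.1 hβθ
  have hθ : Tendsto (fun x : ℝ => θ * (1 - 2 / x)) atTop (𝓝 θ) := by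
    simpa using ((tendsto_const_nhds.div_atTop tendsto_id).const_sub 1).const_mul θ
  filter_upwards [hβ.eventually (eventually_lt_nhds hβr), hθ.eventually (eventually_gt_nhds
    (EReal.coe_lt_coe_iff.1 hrθ)), eventually_gt_atTop 0] with x hx hxθ hx0
  have hx : 2 * x * b x < r := EReal.coe_lt_coe_iff.1 hx
  calc 2 * b x = 2 * x * b x / x := by field_simp
    _ < θ * (1 - 2 / x) / x := div_lt_div_of_pos_right (hx.trans hxθ) hx0
    _ = θ * (1 / x - 2 / x ^ 2) := by field_simp

theorem sq_lt_add_sq_of_mul_pos {x y : ℝ} (h : 0 < x * (x + 2 * y)) : y ^ 2 < (x + y) ^ 2 := by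
  nlinarith

theorem amse_comparison_positive_bias_small_beta_general
    (θ : ℝ) (hθpos : 0 < θ)
    (b : ℝ → ℝ)
    (k : ℕ → ℕ)
    (hk : Tendsto (fun n => (k n : ℝ)) atTop atTop)
    (hC2 : Tendsto (fun n : ℕ => Real.log (k n) / Real.log n) atTop (𝓝 0))
    -- the three normalizing sequences and the associated bias terms
    (T1 T2 T3 a1 a2 a3 : ℕ → ℝ)
    (hT1 : ∀ n, T1 n = muRho 0 (Real.log ((n : ℝ) / (k n : ℝ))))
    (hT2 : ∀ n, T2 n = (1 / (k n : ℝ)) * ∑ i ∈ Finset.Icc 1 (k n),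
      Real.log (1 - Real.log ((i : ℝ) / (k n : ℝ)) / Real.log ((n : ℝ) / (k n : ℝ))))
    (hT3 : ∀ n, T3 n = 1 / Real.log ((n : ℝ) / (k n : ℝ)))
    (ha1 : ∀ n, a1 n = muRho 0 (Real.log ((n : ℝ) / (k n : ℝ))) / T1 n - 1)
    (ha2 : ∀ n, a2 n = muRho 0 (Real.log ((n : ℝ) / (k n : ℝ))) / T2 n - 1)
    (ha3 : ∀ n, a3 n = muRho 0 (Real.log ((n : ℝ) / (k n : ℝ))) / T3 n - 1)
    -- the asymptotic mean square errors of the three estimators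
    (AMSE1 AMSE2 AMSE3 : ℕ → ℝ)
    (hAMSE1 : ∀ n, AMSE1 n =
      (θ * a1 n + b (Real.log ((n : ℝ) / (k n : ℝ)))) ^ 2 + θ ^ 2 / (k n : ℝ))
    (hAMSE2 : ∀ n, AMSE2 n =
      (θ * a2 n + b (Real.log ((n : ℝ) / (k n : ℝ)))) ^ 2 + θ ^ 2 / (k n : ℝ))
    (hAMSE3 : ∀ n, AMSE3 n =
      (θ * a3 n + b (Real.log ((n : ℝ) / (k n : ℝ)))) ^ 2 + θ ^ 2 / (k n : ℝ))
    (hbpos : ∀ᶠ x in atTop, 0 ≤ b x)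
    (β : EReal)
    (hβ : Tendsto (fun x : ℝ => ((2 * x * b x : ℝ) : EReal)) atTop (𝓝 β))
    (hβθ : β < (θ : EReal)) :
    ∀ᶠ n in atTop, AMSE1 n < min (AMSE2 n) (AMSE3 n) := by
  have ht := tendsto_log_div_atTop
    ((hk.eventually_gt_atTop 0).mono fun _ h => (Nat.cast_pos.1 h).ne') hC2
  filter_upwards [ht.eventually_gt_atTop 0, ht.eventually hbpos,
    ht.eventually (eventually_two_mul_lt_of_tendsto hβ hβθ), hk.eventually_ge_atTop 2]
    with n ht0 hb hbias hk2
  set t := log ((n : ℝ) / k n)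
  have hk2 : 2 ≤ k n := by exact_mod_cast hk2
  have hT2pos : 0 < T2 n := hT2 n ▸ riemannSum_pos ht0 hk2
  have hT2lt : T2 n < muRho 0 t := hT2 n ▸ riemannSum_lt_muRho_zero ht0 (by omega)
  have ha3t : θ * a3 n + 2 * b t < 0 := by
    rw [ha3 n, hT3 n, div_div_eq_mul_div, div_one]
    nlinarith [mul_le_mul_of_nonneg_left (one_div_sub_le_one_sub_mul_muRho_zero ht0) hθpos.le]
  rw [hAMSE1 n, hAMSE2 n, hAMSE3 n, ha1 n, hT1 n, div_self (hT2pos.trans hT2lt).ne', sub_self,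
    mul_zero, zero_add]
  refine lt_min (add_lt_add_left (sq_lt_add_sq_of_mul_pos ?_) _)
    (add_lt_add_left (sq_lt_add_sq_of_mul_pos ?_) _)
  · have hθa2 : 0 < θ * a2 n :=
      mul_pos hθpos (by rw [ha2 n, sub_pos, one_lt_div hT2pos]; exact hT2lt)
    exact mul_pos hθa2 (by linarith)
  · exact mul_pos_of_neg_of_neg (by linarith) ha3t

theorem amse_comparison_positive_bias_small_beta
    (θ ρ : ℝ) (hθpos : 0 < θ) (hρ : ρ ≤ 0)
    (b : ℝ → ℝ) (hb0 : Tendsto b atTop (𝓝 0))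
    (hRV : RegularlyVarying (fun x => |b x|) ρ)
    (k : ℕ → ℕ) (hkbd : ∀ n, 2 ≤ n → 1 ≤ k n ∧ k n < n)
    (hk : Tendsto (fun n => (k n : ℝ)) atTop atTop)
    (hC2 : Tendsto (fun n : ℕ => Real.log (k n) / Real.log n) atTop (𝓝 0))
    (lam : ℝ)
    (hlam : Tendsto (fun n => Real.sqrt (k n) * b (Real.log ((n : ℝ) / (k n : ℝ))))
      atTop (𝓝 lam))
    -- the three normalizing sequences and the associated bias terms
    (T1 T2 T3 a1 a2 a3 : ℕ → ℝ)
    (hT1 : ∀ n, T1 n = muRho 0 (Real.log ((n : ℝ) / (k n : ℝ))))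
    (hT2 : ∀ n, T2 n = (1 / (k n : ℝ)) * ∑ i ∈ Finset.Icc 1 (k n),
      Real.log (1 - Real.log ((i : ℝ) / (k n : ℝ)) / Real.log ((n : ℝ) / (k n : ℝ))))
    (hT3 : ∀ n, T3 n = 1 / Real.log ((n : ℝ) / (k n : ℝ)))
    (ha1 : ∀ n, a1 n = muRho 0 (Real.log ((n : ℝ) / (k n : ℝ))) / T1 n - 1)
    (ha2 : ∀ n, a2 n = muRho 0 (Real.log ((n : ℝ) / (k n : ℝ))) / T2 n - 1)
    (ha3 : ∀ n, a3 n = muRho 0 (Real.log ((n : ℝ) / (k n : ℝ))) / T3 n - 1)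
    -- the asymptotic mean square errors of the three estimators
    (AMSE1 AMSE2 AMSE3 : ℕ → ℝ)
    (hAMSE1 : ∀ n, AMSE1 n =
      (θ * a1 n + b (Real.log ((n : ℝ) / (k n : ℝ)))) ^ 2 + θ ^ 2 / (k n : ℝ))
    (hAMSE2 : ∀ n, AMSE2 n =
      (θ * a2 n + b (Real.log ((n : ℝ) / (k n : ℝ)))) ^ 2 + θ ^ 2 / (k n : ℝ))
    (hAMSE3 : ∀ n, AMSE3 n =
      (θ * a3 n + b (Real.log ((n : ℝ) / (k n : ℝ)))) ^ 2 + θ ^ 2 / (k n : ℝ))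
    (hbpos : ∀ᶠ x in atTop, 0 ≤ b x)
    (β : EReal) (hβ0 : 0 ≤ β)
    (hβ : Tendsto (fun x : ℝ => ((2 * x * b x : ℝ) : EReal)) atTop (𝓝 β))
    (hβθ : β < (θ : EReal)) :
    ∀ᶠ n in atTop, AMSE1 n < min (AMSE2 n) (AMSE3 n) :=
  amse_comparison_positive_bias_small_beta_general θ hθpos b k hk hC2 T1 T2 T3 a1 a2 a3 hT1 hT2 hT3
    ha1 ha2 ha3 AMSE1 AMSE2 AMSE3 hAMSE1 hAMSE2 hAMSE3 hbpos β hβ hβθ
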